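/- arXiv:2502.16341 — 4 statements merged into one kernel-verified Lean document; each statement's English description precedes it below -/
import Mathlib

section
/- Iwasawa-type decomposition of SL(2,ℂ): for every h ∈ SL(2,ℂ) there exist unique φ ∈ ℝ, γ ∈ ℂ and u ∈ SU(2) such that h = q(φ,γ) · u, where q(φ,γ) is the upper triangular matrix [[e^{φ/2}, e^{−φ/2}γ], [0, e^{−φ/2}]]. -/
open Matrix

/-- Iwasawa-type decomposition of `SL(2,ℂ)`: every `h ∈ SL(2,ℂ)` factors uniquely as
`h = q(φ,γ) * u` with `φ ∈ ℝ`, `γ ∈ ℂ`, `u ∈ SU(2)`, where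
`q(φ,γ) = [[e^{φ/2}, e^{-φ/2}γ], [0, e^{-φ/2}]]`. -/
theorem iwasawa_decomposition_SL2C (h : Matrix (Fin 2) (Fin 2) ℂ) (hdet : h.det = 1) :
    ∃! t : ℝ × ℂ × Matrix (Fin 2) (Fin 2) ℂ,
      t.2.2 ∈ Matrix.unitaryGroup (Fin 2) ℂ ∧ t.2.2.det = 1 ∧
      h = !![(Real.exp (t.1 / 2) : ℂ), (Real.exp (-t.1 / 2) : ℂ) * t.2.1;
             0, (Real.exp (-t.1 / 2) : ℂ)] * t.2.2 := by
  set a := h 0 0 with ha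
  set b := h 0 1 with hb
  set c := h 1 0 with hc
  set d := h 1 1 with hd
  have hdet' : a * d - b * c = 1 := by rw [Matrix.det_fin_two] at hdet; exact hdet
  set r : ℝ := Complex.normSq c + Complex.normSq d with hr_def
  have hrpos : 0 < r := by
    rcases eq_or_ne c 0 with hc0 | hc0
    · rcases eq_or_ne d 0 with hd0 | hd0
      · exfalso; rw [hc0, hd0] at hdet'; simp at hdet'
      · have := Complex.normSq_pos.mpr hd0
        have := Complex.normSq_nonneg c
        simp only [hr_def]; linarith
    · have := Complex.normSq_pos.mpr hc0
      have := Complex.normSq_nonneg d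
      simp only [hr_def]; linarith
  set φ : ℝ := -Real.log r with hφ_def
  set e : ℝ := Real.exp (φ / 2) with he_def
  have hepos : 0 < e := Real.exp_pos _
  have hene : (e : ℂ) ≠ 0 := by exact_mod_cast hepos.ne'
  have he2 : e ^ 2 = r⁻¹ := by
    rw [he_def, ← Real.exp_nat_mul]
    norm_num
    rw [show (2:ℝ) * (-Real.log r / 2) = -Real.log r by ring, Real.exp_neg,
      Real.exp_log hrpos]
  have heinv : Real.exp (-φ / 2) = e⁻¹ := by rw [neg_div, Real.exp_neg]
  have key : (e : ℂ) ^ 2 * (c * (starRingEnd ℂ) c + d * (starRingEnd ℂ) d) = 1 := by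
    rw [Complex.mul_conj, Complex.mul_conj]
    push_cast
    rw [← Complex.ofReal_pow]
    norm_cast
    rw [he2, ← hr_def, inv_mul_cancel₀ hrpos.ne']
  have hinv : (e : ℂ)⁻¹ * (e : ℂ) = 1 := inv_mul_cancel₀ hene
  set γ : ℂ := (e : ℂ) ^ 2 * (a * (starRingEnd ℂ) c + b * (starRingEnd ℂ) d) with hγ_def
  set u : Matrix (Fin 2) (Fin 2) ℂ :=
    !![(e : ℂ) * (starRingEnd ℂ) d, -((e : ℂ) * (starRingEnd ℂ) c);
       (e : ℂ) * c, (e : ℂ) * d] with hu_def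
  refine ⟨(φ, γ, u), ⟨?_, ?_, ?_⟩, ?_⟩
  · rw [Matrix.mem_unitaryGroup_iff]
    ext i j
    fin_cases i <;> fin_cases j <;>
      simp [hu_def, Matrix.mul_apply, Fin.sum_univ_two, Matrix.conjTranspose_apply,
        Matrix.one_apply, _root_.map_mul, Complex.conj_conj, Complex.conj_ofReal]
    · linear_combination (norm := ring_nf) key
    · ring
    · ring
    · linear_combination (norm := ring_nf) key
  · rw [Matrix.det_fin_two]
    simp [hu_def]
    linear_combination key
  · ext i j
    fin_cases i <;> fin_cases j <;>
      simp [hu_def, Matrix.mul_apply, Fin.sum_univ_two, heinv, ← he_def,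
        Complex.ofReal_inv]
    · linear_combination (-a) * key + (e:ℂ)^2 * (starRingEnd ℂ) d * hdet' + (-(γ * c)) * hinv
    · linear_combination (-b) * key + (-((e:ℂ)^2 * (starRingEnd ℂ) c)) * hdet' + (-(γ * d)) * hinv
    · linear_combination (-c) * hinv
    · linear_combination (-d) * hinv
  · rintro ⟨φ', γ', u'⟩ ⟨hu'mem, hu'det, heq⟩
    set e' : ℝ := Real.exp (φ' / 2) with he'_def
    have he'pos : 0 < e' := Real.exp_pos _
    have he'ne : (e' : ℂ) ≠ 0 := by exact_mod_cast he'pos.ne'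
    have heinv' : Real.exp (-φ' / 2) = e'⁻¹ := by rw [neg_div, Real.exp_neg]
    have hu'det2 : u' 0 0 * u' 1 1 - u' 0 1 * u' 1 0 = 1 := by
      rw [Matrix.det_fin_two] at hu'det; exact hu'det
    have hmul : u' * star u' = 1 := Matrix.mem_unitaryGroup_iff.mp hu'mem
    have hmul' : star u' * u' = 1 := Matrix.mem_unitaryGroup_iff'.mp hu'mem
    -- star u' equals the adjugate
    have hadjinv : u' * !![u' 1 1, -(u' 0 1); -(u' 1 0), u' 0 0] = 1 := by
      rw [Matrix.eta_fin_two u', Matrix.mul_fin_two, Matrix.one_fin_two]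
      ext i j
      fin_cases i <;> fin_cases j <;> simp <;> ring_nf <;>
        linear_combination hu'det2
    have hstar : star u' = !![u' 1 1, -(u' 0 1); -(u' 1 0), u' 0 0] := by
      calc star u' = star u' * (u' * !![u' 1 1, -(u' 0 1); -(u' 1 0), u' 0 0]) := by
            rw [hadjinv, mul_one]
        _ = (star u' * u') * !![u' 1 1, -(u' 0 1); -(u' 1 0), u' 0 0] := by rw [mul_assoc]
        _ = _ := by rw [hmul', one_mul]
    have hs00 : (starRingEnd ℂ) (u' 0 0) = u' 1 1 := by
      have := congrFun (congrFun hstar 0) 0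
      simpa [Matrix.conjTranspose_apply] using this
    have hs01 : (starRingEnd ℂ) (u' 1 0) = -(u' 0 1) := by
      have := congrFun (congrFun hstar 0) 1
      simpa [Matrix.conjTranspose_apply] using this
    -- entries of heq
    have hq00 : a = (e' : ℂ) * u' 0 0 + (e' : ℂ)⁻¹ * γ' * u' 1 0 := by
      have := congrFun (congrFun heq 0) 0
      simpa [Matrix.mul_apply, Fin.sum_univ_two, heinv', ← he'_def, Complex.ofReal_inv,
        ha] using this
    have hq01 : b = (e' : ℂ) * u' 0 1 + (e' : ℂ)⁻¹ * γ' * u' 1 1 := by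
      have := congrFun (congrFun heq 0) 1
      simpa [Matrix.mul_apply, Fin.sum_univ_two, heinv', ← he'_def, Complex.ofReal_inv,
        hb] using this
    have hq10 : c = (e' : ℂ)⁻¹ * u' 1 0 := by
      have := congrFun (congrFun heq 1) 0
      simpa [Matrix.mul_apply, Fin.sum_univ_two, heinv', ← he'_def, Complex.ofReal_inv,
        hc] using this
    have hq11 : d = (e' : ℂ)⁻¹ * u' 1 1 := by
      have := congrFun (congrFun heq 1) 1
      simpa [Matrix.mul_apply, Fin.sum_univ_two, heinv', ← he'_def, Complex.ofReal_inv,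
        hd] using this
    -- row norm of u' second row is 1
    have hrow : Complex.normSq (u' 1 0) + Complex.normSq (u' 1 1) = 1 := by
      have := congrFun (congrFun hmul 1) 1
      simp [Matrix.mul_apply, Fin.sum_univ_two, Matrix.conjTranspose_apply,
        Matrix.one_apply] at this
      have : ((Complex.normSq (u' 1 0) + Complex.normSq (u' 1 1) : ℝ) : ℂ) = 1 := by
        push_cast
        rw [← Complex.mul_conj, ← Complex.mul_conj]
        linear_combination this
      exact_mod_cast this
    -- hence r = e'⁻²  and φ' = φ
    have hre : r = (e' * e')⁻¹ := by
      rw [hr_def, hq10, hq11]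
      rw [Complex.normSq_mul, Complex.normSq_mul]
      have : Complex.normSq ((e' : ℂ)⁻¹) = (e' * e')⁻¹ := by
        rw [← Complex.ofReal_inv, Complex.normSq_ofReal]
        rw [mul_inv]
      rw [this, ← mul_add, hrow, mul_one]
    have hφeq : φ' = φ := by
      rw [hφ_def, hre]
      rw [he'_def, ← Real.exp_add]
      rw [show Real.exp (φ' / 2 + φ' / 2) = Real.exp φ' by ring_nf]
      rw [← Real.exp_neg, Real.log_exp]
      ring
    have hee : e' = e := by rw [he_def, he'_def, hφeq]
    -- u' second row
    have hu10 : u' 1 0 = (e : ℂ) * c := by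
      rw [hq10, hee]; field_simp
    have hu11 : u' 1 1 = (e : ℂ) * d := by
      rw [hq11, hee]; field_simp
    have hu00 : u' 0 0 = (e : ℂ) * (starRingEnd ℂ) d := by
      have h2 : u' 0 0 = (starRingEnd ℂ) (u' 1 1) := by rw [← hs00, Complex.conj_conj]
      rw [h2, hu11, _root_.map_mul, Complex.conj_ofReal]
    have hu01 : u' 0 1 = -((e : ℂ) * (starRingEnd ℂ) c) := by
      have h2 : u' 0 1 = -((starRingEnd ℂ) (u' 1 0)) := by rw [hs01, neg_neg]
      rw [h2, hu10, _root_.map_mul, Complex.conj_ofReal]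
    have hueq : u' = u := by
      rw [Matrix.eta_fin_two u', hu00, hu01, hu10, hu11, hu_def]
    have hγeq : γ' = γ := by
      rw [hγ_def]
      rw [hee] at hq00 hq01
      rw [hu00, hu10] at hq00
      rw [hu01, hu11] at hq01
      linear_combination (norm := ring_nf) (-(e:ℂ)^2 * (starRingEnd ℂ) c) * hq00 +
        (-(e:ℂ)^2 * (starRingEnd ℂ) d) * hq01 - γ' * key -
        (γ' * (e:ℂ)^2 * ((starRingEnd ℂ) c * c + (starRingEnd ℂ) d * d)) * hinv
    simp only [Prod.mk.injEq]
    exact ⟨hφeq, hγeq, hueq⟩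
end

section
/- Degree and leading coefficient of the numerator polynomial: let m ≥ 2, let z₁,…,z_m be pairwise distinct complex numbers, let μ = (μ₁,…,μ_m) ∈ ℂ^m with μ ≠ 0, and let r be the least natural number such that Σ_{ℓ=1}^m μ_ℓ z_ℓ^r ≠ 0 (so Σ_{ℓ=1}^m μ_ℓ z_ℓ^j = 0 for all 0 ≤ j < r, and r ≤ m−1). Then the polynomial P(X) := Σ_{ℓ=1}^m μ_ℓ · ∏_{ℓ'≠ℓ} (z_{ℓ'} − X) ∈ ℂ[X] has degree exactly m−1−r, and its coefficient of X^{m−1−r} equals (−1)^{m−1} · Σ_{ℓ=1}^m μ_ℓ z_ℓ^r. -/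
/-!
Write `Q_ℓ = ∏_{ℓ' ≠ ℓ} (z_{ℓ'} - X)` and `W = ∏_ℓ (z_ℓ - X)`. Since `X Q_ℓ = z_ℓ Q_ℓ - W`,
multiplying `Σ_ℓ c_ℓ Q_ℓ` by `X` replaces `c_ℓ` by `c_ℓ z_ℓ` up to the multiple `(Σ_ℓ c_ℓ) W`.
When the moments `Σ_ℓ μ_ℓ z_ℓ^j` vanish for `j < r`, iterating gives
`X^r P = Σ_ℓ μ_ℓ z_ℓ^r Q_ℓ`, a polynomial of degree at most `m - 1` whose coefficient of
`X^{m-1}` is `(-1)^{m-1} Σ_ℓ μ_ℓ z_ℓ^r ≠ 0`. Dividing by `X^r` gives the degree and coefficient.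
-/

open Finset Polynomial

section Cofactor

variable {ι R : Type*} [Fintype ι] [DecidableEq ι] [CommRing R]

noncomputable def cofactor (z : ι → R) (ℓ : ι) : R[X] :=
  ∏ ℓ' ∈ univ.erase ℓ, (C (z ℓ') - X)

theorem X_mul_cofactor (z : ι → R) (ℓ : ι) :
    X * cofactor z ℓ = C (z ℓ) * cofactor z ℓ - ∏ ℓ', (C (z ℓ') - X) := by
  rw [cofactor, ← mul_prod_erase univ (fun ℓ' => C (z ℓ') - X) (mem_univ ℓ)]
  ring

theorem X_mul_sum_C_mul_cofactor (z c : ι → R) :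
    X * ∑ ℓ, C (c ℓ) * cofactor z ℓ
      = ∑ ℓ, C (c ℓ * z ℓ) * cofactor z ℓ - C (∑ ℓ, c ℓ) * ∏ ℓ', (C (z ℓ') - X) := by
  simp only [mul_sum, map_sum, sum_mul, ← sum_sub_distrib, C_mul]
  refine sum_congr rfl fun ℓ _ => ?_
  rw [mul_left_comm, X_mul_cofactor]
  ring

theorem X_pow_mul_sum_C_mul_cofactor_of_moments_eq_zero (z μ : ι → R) (r : ℕ)
    (hmom : ∀ j < r, ∑ ℓ, μ ℓ * z ℓ ^ j = 0) :
    X ^ r * ∑ ℓ, C (μ ℓ) * cofactor z ℓ = ∑ ℓ, C (μ ℓ * z ℓ ^ r) * cofactor z ℓ := by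
  induction r with
  | zero => simp
  | succ r ih =>
    rw [pow_succ', mul_assoc, ih fun j hj => hmom j (hj.trans r.lt_succ_self),
      X_mul_sum_C_mul_cofactor, hmom r r.lt_succ_self, map_zero, zero_mul, sub_zero]
    simp only [pow_succ, mul_assoc]

theorem natDegree_C_sub_X_le (a : R) : (C a - X).natDegree ≤ 1 := by
  compute_degree

theorem card_univ_erase (ℓ : ι) : #(univ.erase ℓ) = Fintype.card ι - 1 := by
  rw [card_erase_of_mem (mem_univ ℓ), card_univ]

theorem natDegree_cofactor_le (z : ι → R) (ℓ : ι) :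
    (cofactor z ℓ).natDegree ≤ Fintype.card ι - 1 := by
  calc (cofactor z ℓ).natDegree
      ≤ ∑ ℓ' ∈ univ.erase ℓ, (C (z ℓ') - X : R[X]).natDegree := natDegree_prod_le _ _
    _ ≤ #(univ.erase ℓ) • 1 := sum_le_card_nsmul _ _ _ fun ℓ' _ => natDegree_C_sub_X_le (z ℓ')
    _ = Fintype.card ι - 1 := by rw [card_univ_erase, smul_eq_mul, mul_one]

theorem coeff_cofactor (z : ι → R) (ℓ : ι) :
    (cofactor z ℓ).coeff (Fintype.card ι - 1) = (-1) ^ (Fintype.card ι - 1) := by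
  have h := coeff_prod_of_natDegree_le (univ.erase ℓ) (fun ℓ' => C (z ℓ') - X) 1
    fun ℓ' _ => natDegree_C_sub_X_le (z ℓ')
  rw [card_univ_erase, mul_one] at h
  simp [cofactor, h, coeff_X]

theorem natDegree_sum_C_mul_cofactor_le (z c : ι → R) :
    (∑ ℓ, C (c ℓ) * cofactor z ℓ).natDegree ≤ Fintype.card ι - 1 :=
  natDegree_sum_le_of_forall_le _ _ fun ℓ _ =>
    (natDegree_C_mul_le _ _).trans (natDegree_cofactor_le z ℓ)

theorem coeff_sum_C_mul_cofactor (z c : ι → R) :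
    (∑ ℓ, C (c ℓ) * cofactor z ℓ).coeff (Fintype.card ι - 1)
      = (-1) ^ (Fintype.card ι - 1) * ∑ ℓ, c ℓ := by
  simp only [finsetSum_coeff, coeff_C_mul, coeff_cofactor]
  rw [← sum_mul, mul_comm]

end Cofactor

theorem degree_eq_and_coeff_of_X_pow_mul {R : Type*} [Semiring R] {p : R[X]} {r n : ℕ}
    (hdeg : (X ^ r * p).natDegree ≤ n) (hcoeff : (X ^ r * p).coeff n ≠ 0) :
    p.degree = ↑(n - r) ∧ p.coeff (n - r) = (X ^ r * p).coeff n := by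
  have hrn : r ≤ n := by
    by_contra h
    exact hcoeff (by rw [coeff_X_pow_mul', if_neg h])
  have hshift : (X ^ r * p).coeff n = p.coeff (n - r) := by rw [coeff_X_pow_mul', if_pos hrn]
  refine ⟨degree_eq_of_le_of_coeff_ne_zero ?_ (hshift ▸ hcoeff), hshift.symm⟩
  refine (degree_le_iff_coeff_zero _ _).mpr fun N hN => ?_
  have hN : n - r < N := by exact_mod_cast hN
  rw [← coeff_X_pow_mul]
  exact natDegree_le_iff_coeff_eq_zero.mp hdeg _ (by omega)

theorem numerator_polynomial_degree_general {m : ℕ} (z μ : Fin m → ℂ)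
    (r : ℕ)
    (hr : ∑ ℓ, μ ℓ * z ℓ ^ r ≠ 0) (hrmin : ∀ j < r, ∑ ℓ, μ ℓ * z ℓ ^ j = 0) :
    (∑ ℓ, Polynomial.C (μ ℓ) *
        ∏ ℓ' ∈ Finset.univ.erase ℓ, (Polynomial.C (z ℓ') - Polynomial.X)).degree
        = ((m - 1 - r : ℕ) : WithBot ℕ) ∧
      (∑ ℓ, Polynomial.C (μ ℓ) *
          ∏ ℓ' ∈ Finset.univ.erase ℓ, (Polynomial.C (z ℓ') - Polynomial.X)).coeff (m - 1 - r)
        = (-1) ^ (m - 1) * ∑ ℓ, μ ℓ * z ℓ ^ r := by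
  have hshift := X_pow_mul_sum_C_mul_cofactor_of_moments_eq_zero z μ r hrmin
  have hdeg := natDegree_sum_C_mul_cofactor_le z (fun ℓ => μ ℓ * z ℓ ^ r)
  have hcoeff := coeff_sum_C_mul_cofactor z (fun ℓ => μ ℓ * z ℓ ^ r)
  rw [Fintype.card_fin, ← hshift] at hdeg hcoeff
  have htop : (X ^ r * ∑ ℓ, C (μ ℓ) * cofactor z ℓ).coeff (m - 1) ≠ 0 := by
    rw [hcoeff]
    exact mul_ne_zero (pow_ne_zero _ (neg_ne_zero.mpr one_ne_zero)) hr
  obtain ⟨hdegP, hcoeffP⟩ := degree_eq_and_coeff_of_X_pow_mul hdeg htop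
  exact ⟨hdegP, hcoeffP.trans hcoeff⟩

/-- Degree and leading coefficient of the numerator polynomial: with `z₁,…,z_m` pairwise
distinct, `μ ≠ 0`, and `r` the least natural number with `Σ_ℓ μ_ℓ z_ℓ^r ≠ 0`, the
polynomial `P(X) = Σ_ℓ μ_ℓ ∏_{ℓ'≠ℓ} (z_{ℓ'} - X)` has degree exactly `m-1-r` and its
coefficient of `X^{m-1-r}` equals `(-1)^{m-1} Σ_ℓ μ_ℓ z_ℓ^r`. -/
theorem numerator_polynomial_degree {m : ℕ} (hm : 2 ≤ m) (z μ : Fin m → ℂ)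
    (hz : Function.Injective z) (hμ : μ ≠ 0) (r : ℕ)
    (hr : ∑ ℓ, μ ℓ * z ℓ ^ r ≠ 0) (hrmin : ∀ j < r, ∑ ℓ, μ ℓ * z ℓ ^ j = 0) :
    (∑ ℓ, Polynomial.C (μ ℓ) *
        ∏ ℓ' ∈ Finset.univ.erase ℓ, (Polynomial.C (z ℓ') - Polynomial.X)).degree
        = ((m - 1 - r : ℕ) : WithBot ℕ) ∧
      (∑ ℓ, Polynomial.C (μ ℓ) *
          ∏ ℓ' ∈ Finset.univ.erase ℓ, (Polynomial.C (z ℓ') - Polynomial.X)).coeff (m - 1 - r)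
        = (-1) ^ (m - 1) * ∑ ℓ, μ ℓ * z ℓ ^ r :=
  numerator_polynomial_degree_general z μ r hr hrmin
end

section
/- Radial mollification of the Cauchy kernel: let ρ : [0,∞) → [0,∞) be a bounded measurable function with compact support. Then for every z ∈ ℂ with z ≠ 0, the integral ∫_ℂ ρ(|w|)/(z − w) dw (with respect to Lebesgue measure on ℂ ≅ ℝ²) converges absolutely and equals (2π/z) · ∫₀^{|z|} ρ(r) r dr. -/
/-!
In polar coordinates `w = r e^{iθ}` the integral becomes `∫₀^∞ 2π r ρ(r) m(r) dr`, where `m(r)` is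
the mean of `w ↦ (z - w)⁻¹` over the circle `|w| = r`. For `r < |z|` this function is holomorphic
on the closed disc, so `m(r) = 1/z` by the mean value property; for `r > |z|` it vanishes, because
`z (z - w)⁻¹ = 1 - w / (w - z)` on the circle and `w / (w - z)` has mean `1` by Cauchy's formula.
Absolute convergence comes from the local integrability of `|w|⁻¹` in the plane.
-/

open MeasureTheory Set Metric Real

section InvNorm

variable {E : Type*} [NormedAddCommGroup E] [NormedSpace ℝ E] [FiniteDimensional ℝ E]
  [MeasurableSpace E] [BorelSpace E] [Nontrivial E] (μ : Measure E) [μ.IsAddHaarMeasure]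

theorem integrableOn_ball_inv_norm (hE : 2 ≤ Module.finrank ℝ E) (r : ℝ) :
    IntegrableOn (fun x : E => ‖x‖⁻¹) (ball 0 r) μ := by
  rw [integrableOn_fun_norm_addHaar μ (f := fun y => y⁻¹)]
  have hpow : IntegrableOn (fun y : ℝ => y ^ (Module.finrank ℝ E - 2)) (Ioo 0 r) :=
    (continuous_pow _).integrableOn_Icc.mono_set Ioo_subset_Icc_self
  refine hpow.congr_fun (fun y hy => ?_) measurableSet_Ioo
  rw [smul_eq_mul, show Module.finrank ℝ E - 1 = Module.finrank ℝ E - 2 + 1 by omega, pow_succ,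
    mul_inv_cancel_right₀ hy.1.ne']

end InvNorm

theorem HasCompactSupport.comp_norm {E β : Type*} [NormedAddCommGroup E] [ProperSpace E] [Zero β]
    {ρ : ℝ → β} (h : HasCompactSupport ρ) : HasCompactSupport fun x : E => ρ ‖x‖ := by
  obtain ⟨R, -, hR⟩ := h.exists_pos_le_norm
  refine HasCompactSupport.intro (isCompact_closedBall (0 : E) R) fun x hx => hR _ ?_
  simpa using (not_le.1 (mt mem_closedBall_zero_iff.2 hx)).le

theorem HasCompactSupport.integrable_div_sub {g : ℂ → ℂ} (hsupp : HasCompactSupport g)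
    (hg : AEStronglyMeasurable g) {C : ℝ} (hC : ∀ w, ‖g w‖ ≤ C) (z : ℂ) :
    Integrable fun w => g w / (z - w) := by
  obtain ⟨R, hR⟩ := hsupp.isCompact.isBounded.subset_closedBall 0
  have hK : Integrable ((ball 0 (‖z‖ + R + 1)).indicator fun u : ℂ => C * ‖u‖⁻¹) :=
    (integrable_indicator_iff measurableSet_ball).2
      ((integrableOn_ball_inv_norm volume Complex.finrank_real_complex.ge _).const_mul C)
  refine (hK.comp_sub_left z).mono' (hg.mul (by fun_prop : AEStronglyMeasurable fun w : ℂ =>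
    (z - w)⁻¹)) (ae_of_all _ fun w => ?_)
  by_cases hw : w ∈ tsupport g
  · have hzw : ‖z - w‖ < ‖z‖ + R + 1 := by
      have := mem_closedBall_zero_iff.1 (hR hw)
      linarith [norm_sub_le z w]
    rw [indicator_of_mem (mem_ball_zero_iff.2 hzw), norm_div, div_eq_mul_inv]
    exact mul_le_mul_of_nonneg_right (hC w) (by positivity)
  · rw [image_eq_zero_of_notMem_tsupport hw, zero_div, norm_zero]
    exact indicator_nonneg (fun u _ => mul_nonneg ((norm_nonneg _).trans (hC 0)) (by positivity)) _

theorem integrableOn_comp_polarCoord_symm_iff {E : Type*} [NormedAddCommGroup E]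
    [NormedSpace ℝ E] (f : ℝ × ℝ → E) :
    IntegrableOn (fun p => p.1 • f (polarCoord.symm p)) polarCoord.target ↔ Integrable f := by
  rw [← integrableOn_univ, ← integrableOn_congr_set_ae polarCoord_source_ae_eq_univ,
    ← polarCoord.symm_image_target_eq_source,
    integrableOn_image_iff_integrableOn_abs_det_fderiv_smul volume
      polarCoord.open_target.measurableSet
      (fun p _ => (hasFDerivAt_polarCoord_symm p).hasFDerivWithinAt) polarCoord.symm.injOn]
  refine integrableOn_congr_fun (fun p hp => ?_) polarCoord.open_target.measurableSet
  rw [det_fderivPolarCoordSymm, abs_of_pos hp.1]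

namespace Real

variable {E : Type*} [NormedAddCommGroup E] [NormedSpace ℝ E]

theorem setIntegral_Ioo_circleMap (f : ℂ → E) (c : ℂ) (r : ℝ) :
    ∫ θ in Ioo (-π) π, f (circleMap c r θ) = (2 * π) • circleAverage f c r := by
  rw [circleAverage_eq_integral_add (-π), smul_inv_smul₀ two_pi_pos.ne',
    intervalIntegral.integral_comp_add_right (fun θ => f (circleMap c r θ)),
    intervalIntegral.integral_of_le (by linarith [pi_pos]), integral_Ioc_eq_integral_Ioo,
    zero_add, show 2 * π + -π = π by ring]

theorem circleAverage_norm_smul {𝕜 : Type*} [NormedDivisionRing 𝕜] [Module 𝕜 E]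
    [NormSMulClass 𝕜 E] [SMulCommClass ℝ 𝕜 E] (ρ : ℝ → 𝕜) (f : ℂ → E) (r : ℝ) :
    circleAverage (fun w => ρ ‖w‖ • f w) 0 r = ρ |r| • circleAverage f 0 r := by
  rw [← circleAverage_fun_smul]
  exact circleAverage_congr_sphere fun w hw => by rw [mem_sphere_zero_iff_norm.1 hw]

theorem circleAverage_inv_sub {z : ℂ} (hz : z ≠ 0) {r : ℝ} (hr : |r| ≠ ‖z‖) :
    circleAverage (fun w => (z - w)⁻¹) 0 r = if |r| < ‖z‖ then z⁻¹ else 0 := by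
  split_ifs with hlt
  · have hdiff : DifferentiableOn ℂ (fun w : ℂ => (z - w)⁻¹) (closedBall 0 |r|) := by
      refine DifferentiableOn.inv (by fun_prop : DifferentiableOn ℂ (fun w => z - w) _)
        fun w hw => sub_ne_zero.2 ?_
      rintro rfl
      exact (mem_closedBall_zero_iff.1 hw).not_gt hlt
    simpa using (hdiff.diffContOnCl_ball subset_rfl).circleAverage
  · have hz_in : z ∈ ball 0 |r| := mem_ball_zero_iff.2 (lt_of_le_of_ne (not_lt.1 hlt) hr.symm)
    have hmean := DiffContOnCl.circleAverage_smul_div (f := fun _ : ℂ => (1 : ℂ)) (c := 0)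
      diffContOnCl_const hz_in
    simp only [sub_zero, smul_eq_mul, mul_one] at hmean
    have hwz : ∀ w ∈ sphere (0 : ℂ) |r|, w - z ≠ 0 := fun w hw h => by
      rw [sub_eq_zero] at h
      subst h
      exact hr (by simpa using hw.symm)
    have hcont : CircleIntegrable (fun w => w / (w - z)) 0 r :=
      ContinuousOn.circleIntegrable' (continuousOn_id.div (by fun_prop) hwz)
    calc circleAverage (fun w => (z - w)⁻¹) 0 r
        = circleAverage (fun w => z⁻¹ • (1 - w / (w - z))) 0 r := by
          refine circleAverage_congr_sphere fun w hw => ?_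
          have hzw : z - w ≠ 0 := by rw [← neg_sub]; exact neg_ne_zero.2 (hwz w hw)
          have := hwz w hw
          simp only [smul_eq_mul]
          field_simp
          ring
      _ = 0 := by
          rw [circleAverage_fun_smul, circleAverage_fun_sub (circleIntegrable_const _ _ _) hcont,
            hmean, circleAverage_const, sub_self, smul_zero]

end Real

namespace Complex

variable {E : Type*} [NormedAddCommGroup E] [NormedSpace ℝ E]

theorem integrableOn_comp_polarCoord_symm_iff (f : ℂ → E) :
    IntegrableOn (fun p => p.1 • f (Complex.polarCoord.symm p)) polarCoord.target ↔
      Integrable f := by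
  rw [← (volume_preserving_equiv_real_prod.symm).integrable_comp_emb
    measurableEquivRealProd.symm.measurableEmbedding,
    ← _root_.integrableOn_comp_polarCoord_symm_iff]
  rfl

theorem polarCoord_symm_eq_circleMap (r θ : ℝ) :
    Complex.polarCoord.symm (r, θ) = circleMap 0 r θ := by
  simp [circleMap, exp_mul_I, ofReal_cos, ofReal_sin]

theorem integral_eq_integral_Ioi_circleAverage {f : ℂ → E} (hf : Integrable f) :
    ∫ w, f w = ∫ r in Ioi 0, (2 * π * r) • circleAverage f 0 r := by
  have hpolar := (integrableOn_comp_polarCoord_symm_iff f).2 hf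
  rw [← Complex.integral_comp_polarCoord_symm]
  rw [show polarCoord.target = Ioi (0 : ℝ) ×ˢ Ioo (-π) π from rfl, Measure.volume_eq_prod]
    at hpolar ⊢
  rw [setIntegral_prod _ hpolar]
  refine setIntegral_congr_fun measurableSet_Ioi fun r _ => ?_
  simp_rw [polarCoord_symm_eq_circleMap, integral_smul, setIntegral_Ioo_circleMap, smul_smul,
    mul_comm r]

end Complex

/-- Radial mollification of the Cauchy kernel: for `ρ : [0,∞) → [0,∞)` bounded,
measurable, with compact support, and any `z ≠ 0`, the integral
`∫_ℂ ρ(|w|)/(z - w) dw` converges absolutely and equals `(2π/z) ∫₀^{|z|} ρ(r) r dr`. -/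
theorem radial_mollification_cauchy_kernel (ρ : ℝ → ℝ) (hmeas : Measurable ρ)
    (hnonneg : ∀ r, 0 ≤ ρ r) (hbdd : ∃ C, ∀ r, ρ r ≤ C) (hsupp : HasCompactSupport ρ)
    (z : ℂ) (hz : z ≠ 0) :
    Integrable (fun w : ℂ => (ρ ‖w‖ : ℂ) / (z - w)) ∧
      ∫ w : ℂ, (ρ ‖w‖ : ℂ) / (z - w)
        = ((2 * Real.pi : ℝ) : ℂ) / z *
            ((∫ r in (0:ℝ)..‖z‖, ρ r * r : ℝ) : ℂ) := by
  obtain ⟨C, hC⟩ := hbdd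
  have hint : Integrable fun w : ℂ => (ρ ‖w‖ : ℂ) / (z - w) :=
    (hsupp.comp_left Complex.ofReal_zero).comp_norm.integrable_div_sub
      (Complex.measurable_ofReal.comp (hmeas.comp measurable_norm)).aestronglyMeasurable
      (fun w => by simpa [abs_of_nonneg (hnonneg _)] using hC ‖w‖) z
  refine ⟨hint, ?_⟩
  have hshell : ∀ᵐ r ∂volume.restrict (Ioi 0),
      (2 * π * r) • circleAverage (fun w : ℂ => (ρ ‖w‖ : ℂ) / (z - w)) 0 r =
        (Ioo 0 ‖z‖).indicator (fun r => ((2 * π : ℝ) : ℂ) / z * ((ρ r * r : ℝ) : ℂ)) r := by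
    filter_upwards [ae_restrict_mem measurableSet_Ioi, ae_restrict_of_ae (volume.ae_ne ‖z‖)]
      with r (hr : 0 < r) hrz
    simp_rw [div_eq_mul_inv, ← Complex.real_smul]
    rw [circleAverage_norm_smul, circleAverage_inv_sub hz (by rwa [abs_of_pos hr]), abs_of_pos hr]
    by_cases hlt : r < ‖z‖
    · rw [if_pos hlt, indicator_of_mem (mem_Ioo.2 ⟨hr, hlt⟩)]
      simp only [Complex.real_smul]
      push_cast
      ring
    · rw [if_neg hlt, indicator_of_notMem fun h => hlt h.2, smul_zero, smul_zero]
  rw [Complex.integral_eq_integral_Ioi_circleAverage hint, integral_congr_ae hshell,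
    integral_indicator measurableSet_Ioo, Measure.restrict_restrict measurableSet_Ioo,
    inter_eq_self_of_subset_left Ioo_subset_Ioi_self, integral_const_mul, integral_complex_ofReal,
    intervalIntegral.integral_of_le (norm_nonneg z), integral_Ioc_eq_integral_Ioo]
end

section
/- Uniform lower bound for the family of rational functions away from their zeros: let m ≥ 2 and let z₁,…,z_m be pairwise distinct complex numbers. Then there exist constants C₀ > 0 and ρ > 0 such that for every μ = (μ₁,…,μ_m) ∈ ℂ^m there exists w ∈ ℂ with the closed disc of center w and radius ρ disjoint from {z₁,…,z_m} and with |Σ_{ℓ=1}^m μ_ℓ/(z_ℓ − ζ)| ≥ C₀ · ‖μ‖ for every ζ in that closed disc, where ‖μ‖ is the Euclidean norm of μ in ℂ^m. -/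
/-!
Choose points `w_j` at distance at least `2` from all the `z_ℓ`. The functionals
`μ ↦ Σ_ℓ μ_ℓ / (z_ℓ - w_j)` have no common zero `μ ≠ 0`: over the common denominator,
`Σ_ℓ μ_ℓ / (x - z_ℓ)` has a numerator of degree `< m` vanishing at the `m` points `w_j`, hence
identically, and its value at `z_i` is `μ_i ∏_{k ≠ i} (z_i - z_k)`. In finite dimension this makes
the family bounded below: some `|Σ_ℓ μ_ℓ / (z_ℓ - w_j)|` is at least `c ‖μ‖`. On the disc of radius `ρ ≤ 1` around
that `w_j` every term moves by at most `|μ_ℓ| ρ`, so `ρ = c / (2m)` keeps the sum above `c ‖μ‖ / 2`.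
-/

open Finset Metric Polynomial Lagrange

section PartialFraction

variable {K ι : Type*} [Field K] [Fintype ι] [DecidableEq ι]

noncomputable def partialFractionNumerator (z μ : ι → K) : K[X] :=
  ∑ ℓ, μ ℓ • nodal (univ.erase ℓ) z

variable (z μ : ι → K)

theorem sum_div_sub_mul_prod_sub {x : K} (hx : ∀ ℓ, x ≠ z ℓ) :
    (∑ ℓ, μ ℓ / (x - z ℓ)) * ∏ k, (x - z k) = (partialFractionNumerator z μ).eval x := by
  simp only [partialFractionNumerator, eval_finsetSum, eval_smul, eval_nodal, smul_eq_mul,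
    sum_mul]
  refine sum_congr rfl fun ℓ _ => ?_
  rw [← mul_prod_erase univ (fun k => x - z k) (mem_univ ℓ), ← mul_assoc,
    div_mul_cancel₀ _ (sub_ne_zero.mpr (hx ℓ))]

theorem partialFractionNumerator_mem_degreeLT :
    partialFractionNumerator z μ ∈ degreeLT K (Fintype.card ι) := by
  refine Submodule.sum_mem _ fun ℓ _ => Submodule.smul_mem _ _ (mem_degreeLT.mpr ?_)
  rw [degree_nodal, ← card_univ]
  exact_mod_cast card_erase_lt_of_mem (mem_univ ℓ)

theorem eval_partialFractionNumerator_node (i : ι) :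
    (partialFractionNumerator z μ).eval (z i) = μ i * ∏ k ∈ univ.erase i, (z i - z k) := by
  rw [partialFractionNumerator, eval_finsetSum, sum_eq_single i, eval_smul, eval_nodal,
    smul_eq_mul]
  · intro ℓ _ hℓ
    rw [eval_smul, eval_nodal_at_node (mem_erase.mpr ⟨fun h => hℓ h.symm, mem_univ i⟩),
      smul_zero]
  · simp

variable {z μ}

theorem eq_zero_of_forall_sum_div_sub_eq_zero {κ : Type*} [Fintype κ] (hz : Function.Injective z)
    {w : κ → K} (hw : Function.Injective w) (hcard : Fintype.card ι ≤ Fintype.card κ)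
    (hzw : ∀ ℓ j, z ℓ ≠ w j) (h : ∀ j, ∑ ℓ, μ ℓ / (z ℓ - w j) = 0) : μ = 0 := by
  have hroots : ∀ j, (partialFractionNumerator z μ).eval (w j) = 0 := fun j => by
    have hneg : ∑ ℓ, μ ℓ / (w j - z ℓ) = -∑ ℓ, μ ℓ / (z ℓ - w j) := by
      simp only [← sum_neg_distrib, ← div_neg, neg_sub]
    rw [← sum_div_sub_mul_prod_sub z μ fun ℓ => (hzw ℓ j).symm, hneg, h j, neg_zero, zero_mul]
  have hp : partialFractionNumerator z μ = 0 := by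
    refine eq_zero_of_degree_lt_of_eval_index_eq_zero (s := univ) hw.injOn ?_ fun j _ => hroots j
    rw [card_univ]
    exact (mem_degreeLT.mp (partialFractionNumerator_mem_degreeLT z μ)).trans_le
      (by exact_mod_cast hcard)
  funext i
  have hprod : ∏ k ∈ univ.erase i, (z i - z k) ≠ 0 := by
    simpa only [eval_nodal] using
      eval_nodal_not_at_node (s := univ.erase i) (v := z) fun k hk => hz.ne (mem_erase.mp hk).1.symm
  simpa [hp, hprod] using eval_partialFractionNumerator_node z μ i

end PartialFraction

theorem exists_pos_forall_exists_mul_norm_le_norm {𝕜 E κ : Type*} [NontriviallyNormedField 𝕜]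
    [CompleteSpace 𝕜] [NormedAddCommGroup E] [NormedSpace 𝕜 E] [FiniteDimensional 𝕜 E]
    [Fintype κ] [Nonempty κ] (f : κ → E →ₗ[𝕜] 𝕜) (hf : ∀ x, (∀ j, f j x = 0) → x = 0) :
    ∃ c > 0, ∀ x, ∃ j, c * ‖x‖ ≤ ‖f j x‖ := by
  have hker : LinearMap.ker (LinearMap.pi f) = ⊥ :=
    LinearMap.ker_eq_bot'.mpr fun x hx => hf x (congr_fun hx)
  obtain ⟨K, -, hK⟩ := (LinearMap.pi f).exists_antilipschitzWith hker
  obtain ⟨c, hc, hL⟩ := antilipschitzWith_iff_exists_mul_le_norm.mp ⟨K, hK⟩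
  refine ⟨c, hc, fun x => ?_⟩
  obtain ⟨j, -, hj⟩ := univ.exists_mem_eq_sup univ_nonempty fun j => ‖f j x‖₊
  exact ⟨j, (hL x).trans_eq (congrArg NNReal.toReal hj)⟩

theorem exists_injective_forall_le_norm_sub {ι : Type*} [Fintype ι] (z : ι → ℂ) (R : ℝ) :
    ∃ w : ℕ → ℂ, Function.Injective w ∧ ∀ ℓ n, R ≤ ‖z ℓ - w n‖ := by
  set S := ∑ ℓ, ‖z ℓ‖
  refine ⟨fun n => ((|R| + S + n : ℝ) : ℂ), fun a b hab => by simpa using hab, fun ℓ n => ?_⟩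
  have hzS : ‖z ℓ‖ ≤ S := single_le_sum (fun k _ => norm_nonneg (z k)) (mem_univ ℓ)
  have hw : ‖((|R| + S + n : ℝ) : ℂ)‖ = |R| + S + n := by
    rw [Complex.norm_real, Real.norm_of_nonneg (by positivity)]
  calc R ≤ ‖((|R| + S + n : ℝ) : ℂ)‖ - ‖z ℓ‖ := by
        rw [hw]
        linarith [le_abs_self R, (n.cast_nonneg : (0 : ℝ) ≤ n)]
    _ ≤ ‖z ℓ - ((|R| + S + n : ℝ) : ℂ)‖ := by
        rw [norm_sub_rev]
        exact norm_sub_norm_le _ _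

theorem norm_div_sub_div_le {𝕜 : Type*} [NormedField 𝕜] {x y : 𝕜} (hx : 1 ≤ ‖x‖) (hy : 1 ≤ ‖y‖)
    (a : 𝕜) : ‖a / x - a / y‖ ≤ ‖a‖ * ‖x - y‖ := by
  have hx0 : x ≠ 0 := norm_pos_iff.mp (by linarith)
  have hy0 : y ≠ 0 := norm_pos_iff.mp (by linarith)
  rw [div_sub_div _ _ hx0 hy0, show a * y - x * a = a * (y - x) by ring, norm_div, norm_mul,
    norm_mul, norm_sub_rev y]
  exact div_le_self (by positivity) (one_le_mul_of_one_le_of_one_le hx hy)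

theorem norm_sum_div_sub_le_norm_sum_div_sub_add {𝕜 ι : Type*} [NormedField 𝕜] [Fintype ι]
    (μ z : ι → 𝕜) {w ζ : 𝕜} (hw : ∀ ℓ, 2 ≤ ‖z ℓ - w‖) (hζ : ‖ζ - w‖ ≤ 1) :
    ‖∑ ℓ, μ ℓ / (z ℓ - w)‖ ≤ ‖∑ ℓ, μ ℓ / (z ℓ - ζ)‖ + (∑ ℓ, ‖μ ℓ‖) * ‖ζ - w‖ := by
  have hζ_far : ∀ ℓ, 1 ≤ ‖z ℓ - ζ‖ := fun ℓ => by
    linarith [hw ℓ, norm_sub_le_norm_sub_add_norm_sub (z ℓ) ζ w]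
  have hdiff : ‖∑ ℓ, μ ℓ / (z ℓ - w) - ∑ ℓ, μ ℓ / (z ℓ - ζ)‖ ≤ (∑ ℓ, ‖μ ℓ‖) * ‖ζ - w‖ := by
    rw [← sum_sub_distrib, sum_mul]
    refine (norm_sum_le _ _).trans (sum_le_sum fun ℓ _ => ?_)
    simpa only [sub_sub_sub_cancel_left] using
      norm_div_sub_div_le ((hw ℓ).trans' one_le_two) (hζ_far ℓ) (μ ℓ)
  linarith [norm_sub_norm_le (∑ ℓ, μ ℓ / (z ℓ - w)) (∑ ℓ, μ ℓ / (z ℓ - ζ))]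

theorem PiLp.sum_norm_apply_le_card_mul_norm {p : ENNReal} [Fact (1 ≤ p)] {ι E : Type*}
    [Fintype ι] [SeminormedAddCommGroup E] (x : PiLp p fun _ : ι => E) :
    ∑ i, ‖x i‖ ≤ Fintype.card ι * ‖x‖ :=
  (sum_le_sum fun i _ => PiLp.norm_apply_le x i).trans_eq (by simp)

def evalPartialFraction {𝕜 ι : Type*} [RCLike 𝕜] [Fintype ι] (z : ι → 𝕜) (w : 𝕜) :
    EuclideanSpace 𝕜 ι →ₗ[𝕜] 𝕜 where
  toFun μ := ∑ ℓ, μ ℓ / (z ℓ - w)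
  map_add' μ ν := by simp only [PiLp.add_apply, add_div, sum_add_distrib]
  map_smul' a μ := by
    simp only [PiLp.smul_apply, smul_eq_mul, mul_div_assoc, mul_sum, RingHom.id_apply]

/-- Uniform lower bound for the family of rational functions `ζ ↦ Σ_ℓ μ_ℓ/(z_ℓ - ζ)`
away from their zeros: for pairwise distinct `z₁,…,z_m ∈ ℂ` there are `C₀ > 0` and
`ρ > 0` such that for every `μ ∈ ℂ^m` there is a closed disc of radius `ρ` disjoint from
`{z₁,…,z_m}` on which `|Σ_ℓ μ_ℓ/(z_ℓ - ζ)| ≥ C₀ ‖μ‖` (Euclidean norm of `μ`). -/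
theorem uniform_lower_bound_rational_family {m : ℕ} (hm : 2 ≤ m) (z : Fin m → ℂ)
    (hz : Function.Injective z) :
    ∃ C₀ > 0, ∃ ρ > 0, ∀ μ : EuclideanSpace ℂ (Fin m), ∃ w : ℂ,
      (∀ ℓ, z ℓ ∉ Metric.closedBall w ρ) ∧
      ∀ ζ ∈ Metric.closedBall w ρ, C₀ * ‖μ‖ ≤ ‖∑ ℓ, μ ℓ / (z ℓ - ζ)‖ := by
  have : Nonempty (Fin m) := ⟨⟨0, by omega⟩⟩
  obtain ⟨w, hw, hzw⟩ := exists_injective_forall_le_norm_sub z 2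
  have hzw_ne : ∀ ℓ j, z ℓ ≠ w j := fun ℓ j h => by
    simpa [h] using (hzw ℓ j).trans_lt' two_pos
  obtain ⟨c, hc, hlow⟩ := exists_pos_forall_exists_mul_norm_le_norm
    (fun j : Fin m => evalPartialFraction z (w j)) fun μ hμ =>
      WithLp.ofLp_injective 2 <| eq_zero_of_forall_sum_div_sub_eq_zero hz
        (hw.comp Fin.val_injective) le_rfl (fun ℓ j => hzw_ne ℓ j) hμ
  refine ⟨c / 2, half_pos hc, min 1 (c / (2 * m)), by positivity, fun μ => ?_⟩
  obtain ⟨j, hj⟩ := hlow μ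
  refine ⟨w j, fun ℓ hℓ => ?_, fun ζ hζ => ?_⟩
  · rw [mem_closedBall, dist_eq_norm] at hℓ
    linarith [hzw ℓ j, min_le_left 1 (c / (2 * m))]
  rw [mem_closedBall, dist_eq_norm] at hζ
  have hm0 : (0 : ℝ) < m := by positivity
  calc c / 2 * ‖μ‖ = c * ‖μ‖ - m * ‖μ‖ * (c / (2 * m)) := by field_simp; ring
    _ ≤ ‖∑ ℓ, μ ℓ / (z ℓ - w j)‖ - (∑ ℓ, ‖μ ℓ‖) * ‖ζ - w j‖ := by
      gcongr
      · exact hj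
      · simpa using PiLp.sum_norm_apply_le_card_mul_norm μ
      · exact hζ.trans (min_le_right _ _)
    _ ≤ ‖∑ ℓ, μ ℓ / (z ℓ - ζ)‖ := by
      linarith [norm_sum_div_sub_le_norm_sum_div_sub_add μ z (hzw · j)
        (hζ.trans (min_le_left _ _))]
end
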